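/- Let n ≥ 1 and d = 2^n. For each irreducible complex character χ of the symmetric group S_4 of degree 3 (there are exactly two such characters, corresponding to the partitions [2,1,1] and [3,1]), the operator P_χ := (3/24)·Σ_{σ∈S_4} χ(σ)·U_σ on (ℂ^d)^{⊗4} satisfies P_χ · P_{n,4} = 0. Equivalently, the stabilizer code V_{n,4} has trivial intersection with the isotypic components of (ℂ^d)^{⊗4} associated with the partitions [2,1,1] and [3,1]. -/

import Mathlib

open scoped BigOperators

noncomputable section

/-- `t`-fold tensor (Kronecker) power of a matrix, acting on `(ℂ^α)^{⊗t}`. -/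
def tpow {α : Type*} [Fintype α] (M : Matrix α α ℂ) (t : ℕ) :
    Matrix (Fin t → α) (Fin t → α) ℂ :=
  Matrix.of fun x y => ∏ i, M (x i) (y i)

/-- The rank-one operator `|ψ⟩⟨ψ|`. -/
def rankOne {α : Type*} (ψ : α → ℂ) : Matrix α α ℂ :=
  Matrix.of fun i j => ψ i * (starRingEnd ℂ) (ψ j)

/-- The operator `U_σ` permuting the `t` tensor factors of `(ℂ^α)^{⊗t}`. -/
def permOp (α : Type*) [DecidableEq α] {t : ℕ} (σ : Equiv.Perm (Fin t)) :
    Matrix (Fin t → α) (Fin t → α) ℂ :=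
  Matrix.of fun x y => if (fun k => x (σ k)) = y then 1 else 0

/-- The projector `P_[t]` onto the symmetric subspace `Sym_t(ℂ^α)`. -/
def symProj (α : Type*) [DecidableEq α] (t : ℕ) :
    Matrix (Fin t → α) (Fin t → α) ℂ :=
  (t.factorial : ℂ)⁻¹ • ∑ σ : Equiv.Perm (Fin t), permOp α σ

/-- Single-qubit Pauli matrices labelled by `𝔽₂²`:
`σ_{(0,0)} = I`, `σ_{(0,1)} = X`, `σ_{(1,0)} = Z`, `σ_{(1,1)} = Y`. -/
def pauli (a : ZMod 2 × ZMod 2) : Matrix (ZMod 2) (ZMod 2) ℂ :=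
  Matrix.of fun x y =>
    if a = (0, 0) then (if x = y then 1 else 0)
    else if a = (0, 1) then (if x = y + 1 then 1 else 0)
    else if a = (1, 0) then (if x = y then (if x = 0 then 1 else -1) else 0)
    else (if x = y + 1 then (if x = 0 then -Complex.I else Complex.I) else 0)

/-- The Pauli operator `W_a`, `a ∈ 𝔽₂^{2n}`, on qubits labelled by a finite type `Q`. -/
def PauliW {Q : Type*} [Fintype Q] (a : Q → ZMod 2 × ZMod 2) :
    Matrix (Q → ZMod 2) (Q → ZMod 2) ℂ :=
  Matrix.of fun x y => ∏ i, pauli (a i) (x i) (y i)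

/-- The stabilizer projector `P_{n,k} = 2^{-2n}·Σ_{a∈𝔽₂^{2n}} W_a^{⊗k}`. -/
def stabProj (n k : ℕ) :
    Matrix (Fin k → (Fin n → ZMod 2)) (Fin k → (Fin n → ZMod 2)) ℂ :=
  ((2 : ℂ) ^ (2 * n))⁻¹ • ∑ a : Fin n → ZMod 2 × ZMod 2, tpow (PauliW a) k

/-- A single-qubit gate `G` applied to qubit `i` of `n` qubits (identity elsewhere). -/
def embedGate (n : ℕ) (G : Matrix (ZMod 2) (ZMod 2) ℂ) (i : Fin n) :
    Matrix (Fin n → ZMod 2) (Fin n → ZMod 2) ℂ :=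
  Matrix.of fun x y =>
    G (x i) (y i) * ∏ k ∈ Finset.univ.erase i, (if x k = y k then (1 : ℂ) else 0)

/-- The Hadamard gate `((1+i)/2)·[[1,1],[1,−1]]`. -/
def hGate : Matrix (ZMod 2) (ZMod 2) ℂ :=
  Matrix.of fun x y => (1 + Complex.I) / 2 * (if x = 1 ∧ y = 1 then -1 else 1)

/-- The phase gate `diag(1, −i)`. -/
def sGate : Matrix (ZMod 2) (ZMod 2) ℂ :=
  Matrix.of fun x y => if x = y then (if x = 0 then 1 else -Complex.I) else 0

/-- The CNOT gate with control qubit `i` and target qubit `j`. -/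
def cnotGate (n : ℕ) (i j : Fin n) :
    Matrix (Fin n → ZMod 2) (Fin n → ZMod 2) ℂ :=
  Matrix.of fun x y =>
    if x i = y i ∧ x j = y i + y j ∧ ∀ k, k ≠ i → k ≠ j → x k = y k then 1 else 0

/-- Generators of the `n`-qubit Clifford group: Hadamard and phase gates on each qubit,
CNOT gates on each ordered pair of distinct qubits. -/
def cliffordGens (n : ℕ) : Set (Matrix (Fin n → ZMod 2) (Fin n → ZMod 2) ℂ) :=
  (⋃ i : Fin n, {embedGate n hGate i}) ∪ (⋃ i : Fin n, {embedGate n sGate i}) ∪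
    ⋃ (i : Fin n) (j : Fin n) (_ : i ≠ j), {cnotGate n i j}

/-- The `n`-qubit Clifford group: the subgroup of the unitary group `U(2^n)` generated by
the Hadamard and phase gates on each qubit together with the CNOT gates. -/
def CliffordGroup (n : ℕ) : Subgroup (Matrix.unitaryGroup (Fin n → ZMod 2) ℂ) :=
  Subgroup.closure
    {U : Matrix.unitaryGroup (Fin n → ZMod 2) ℂ |
      (U : Matrix (Fin n → ZMod 2) (Fin n → ZMod 2) ℂ) ∈ cliffordGens n}

/-! On one qubit, `Σ_a σ_a^{⊗4}` has `(p, q)` entry `2·[p has even weight]·[p + q ∈ {0000, 1111}]`,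
and a double transposition maps every even-weight word of length 4 to itself or to its
complement. Hence `U_c P_{n,4} = P_{n,4}` for every `c` in the Klein four-group `K ⊆ S_4`, and
`P_χ P_{n,4} = 0` as soon as `Σ_{c ∈ K} χ(σc) = 0` for all `σ`. By Schur's lemma the class sum of
the double transpositions acts on an irreducible `V` as a scalar `ω`, so that
`Σ_{c ∈ K} χ(σc) = (1 + ω) χ(σ)`; the multiplication table of the class sums of `S_4` and the
orthogonality relation `Σ_g χ(g) χ(g⁻¹) = 24` force `ω = -1` when `χ(1) = 3`. -/

namespace FDRep

open CategoryTheory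

variable {k G : Type*} [Field k] [Group G] (V : FDRep k G)

theorem sum_ρ_mul_comm (K : Finset G) (hK : ∀ h, ∀ x ∈ K, h * x * h⁻¹ ∈ K) (g : G) :
    (∑ x ∈ K, V.ρ x) * V.ρ g = V.ρ g * ∑ x ∈ K, V.ρ x := by
  rw [Finset.sum_mul, Finset.mul_sum]
  refine Finset.sum_nbij' (fun x => g⁻¹ * x * g) (fun x => g * x * g⁻¹)
    (fun x hx => by simpa using hK g⁻¹ x hx) (fun x hx => hK g x hx) (fun x _ => by group)
    (fun x _ => by group) fun x _ => ?_
  rw [← map_mul, ← map_mul]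
  group

theorem exists_sum_ρ_eq_smul_one [IsAlgClosed k] [Simple V] (K : Finset G)
    (hK : ∀ h, ∀ x ∈ K, h * x * h⁻¹ ∈ K) : ∃ ω : k, ∑ x ∈ K, V.ρ x = ω • 1 := by
  let f : V ⟶ V :=
    { hom := FGModuleCat.ofHom (∑ x ∈ K, V.ρ x)
      comm := fun g => by
        ext v
        exact LinearMap.congr_fun (V.sum_ρ_mul_comm K hK g) v }
  obtain ⟨ω, hω⟩ := endomorphism_simple_eq_smul_id k f
  exact ⟨ω, (congrArg (fun φ : V ⟶ V => φ.hom.hom.hom) hω).symm⟩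

theorem character_one_mul_sum_sum_character_mul [IsAlgClosed k] [Simple V] (L K : Finset G)
    (hK : ∀ h, ∀ x ∈ K, h * x * h⁻¹ ∈ K) :
    V.character 1 * ∑ x ∈ L, ∑ y ∈ K, V.character (x * y) =
      (∑ x ∈ L, V.character x) * ∑ y ∈ K, V.character y := by
  obtain ⟨ω, hω⟩ := V.exists_sum_ρ_eq_smul_one K hK
  have htrace (x : G) : ∑ y ∈ K, V.character (x * y) = ω * V.character x := by
    simp only [character, map_mul, ← map_sum, ← Finset.mul_sum, hω, mul_smul_comm, mul_one,
      map_smul, smul_eq_mul]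
  have hK1 := htrace 1
  simp only [one_mul] at hK1
  simp only [htrace, ← Finset.mul_sum, hK1]
  ring

theorem character_perm_inv {α : Type*} [Fintype α] [DecidableEq α] (V : FDRep k (Equiv.Perm α))
    (g : Equiv.Perm α) : V.character g⁻¹ = V.character g := by
  obtain ⟨h, hh⟩ := isConj_iff.mp (Equiv.Perm.isConj_iff_cycleType_eq.mpr (g.cycleType_inv))
  rw [← V.char_conj g⁻¹ h, hh]

end FDRep

theorem Finset.sum_sum_mul_eq {G M : Type*} [Mul G] [AddCommMonoid M] {K L : Finset G}
    {m : Multiset G} (h : (K ×ˢ L).val.map (fun p => p.1 * p.2) = m) (f : G → M) :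
    ∑ x ∈ K, ∑ y ∈ L, f (x * y) = (m.map f).sum := by
  rw [← Finset.sum_product', ← h, Multiset.map_map]
  rfl

section ConjClass

variable {G : Type*} [Group G] [Fintype G] [DecidableEq G]

def conjClassFinset (g : G) : Finset G := Finset.univ.filter fun x => ∃ h, h * g * h⁻¹ = x

theorem conj_mem_conjClassFinset {g x : G} (h : G) (hx : x ∈ conjClassFinset g) :
    h * x * h⁻¹ ∈ conjClassFinset g := by
  obtain ⟨h', rfl⟩ := (Finset.mem_filter.mp hx).2
  exact Finset.mem_filter.mpr ⟨Finset.mem_univ _, h * h', by group⟩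

theorem sum_conjClassFinset_of_conj_invariant {M : Type*} [AddCommMonoid M] {f : G → M}
    (hf : ∀ g h, f (h * g * h⁻¹) = f g) (g : G) :
    ∑ x ∈ conjClassFinset g, f x = (conjClassFinset g).card • f g := by
  rw [Finset.sum_congr rfl fun x hx => ?_, Finset.sum_const]
  obtain ⟨h, rfl⟩ := (Finset.mem_filter.mp hx).2
  exact hf g h

theorem FDRep.character_one_mul_sum_eq_of_map_mul_eq {k : Type*} [Field k] [IsAlgClosed k]
    (V : FDRep k G) [CategoryTheory.Simple V] {a b : G} {m : Multiset G}
    (hm : (conjClassFinset a ×ˢ conjClassFinset b).val.map (fun p => p.1 * p.2) = m) :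
    V.character 1 * (m.map V.character).sum =
      ((conjClassFinset a).card • V.character a) * ((conjClassFinset b).card • V.character b) := by
  rw [← Finset.sum_sum_mul_eq hm,
    V.character_one_mul_sum_sum_character_mul _ _ fun h _ hx => conj_mem_conjClassFinset h hx,
    sum_conjClassFinset_of_conj_invariant V.char_conj,
    sum_conjClassFinset_of_conj_invariant V.char_conj]

end ConjClass

local notation "S₄" => Equiv.Perm (Fin 4)

namespace S4

open Equiv

def transpositions : Finset S₄ := conjClassFinset (swap 0 1)

def doubleTranspositions : Finset S₄ := conjClassFinset (swap 0 1 * swap 2 3)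

def threeCycles : Finset S₄ := conjClassFinset (swap 0 1 * swap 1 2)

def fourCycles : Finset S₄ := conjClassFinset (swap 0 1 * swap 1 2 * swap 2 3)

def kleinFour : Finset S₄ := {1, swap 0 1 * swap 2 3, swap 0 2 * swap 1 3, swap 0 3 * swap 1 2}

theorem univ_val_eq : (Finset.univ : Finset S₄).val =
    {1} + transpositions.val + doubleTranspositions.val + threeCycles.val + fourCycles.val := by
  decide

theorem card_conjClasses : transpositions.card = 6 ∧ doubleTranspositions.card = 3 ∧
    threeCycles.card = 8 ∧ fourCycles.card = 6 := by
  decide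

theorem doubleTranspositions_mul_doubleTranspositions :
    (doubleTranspositions ×ˢ doubleTranspositions).val.map (fun p => p.1 * p.2) =
      3 • {1} + 2 • doubleTranspositions.val := by
  decide

theorem transpositions_mul_doubleTranspositions :
    (transpositions ×ˢ doubleTranspositions).val.map (fun p => p.1 * p.2) =
      transpositions.val + 2 • fourCycles.val := by
  decide

theorem transpositions_mul_transpositions :
    (transpositions ×ˢ transpositions).val.map (fun p => p.1 * p.2) =
      6 • {1} + 2 • doubleTranspositions.val + 3 • threeCycles.val := by
  decide

theorem transpositions_mul_threeCycles :
    (transpositions ×ˢ threeCycles).val.map (fun p => p.1 * p.2) =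
      4 • transpositions.val + 4 • fourCycles.val := by
  decide

theorem kleinFour_eq_insert_one : kleinFour = insert 1 doubleTranspositions := by
  decide

end S4

open Equiv S4 in
theorem FDRep.character_swap_mul_swap_eq_neg_one (V : FDRep ℂ S₄) [CategoryTheory.Simple V]
    (hdeg : V.character 1 = 3) : V.character (swap 0 1 * swap 2 3) = -1 := by
  have hDD := V.character_one_mul_sum_eq_of_map_mul_eq doubleTranspositions_mul_doubleTranspositions
  have hTD := V.character_one_mul_sum_eq_of_map_mul_eq transpositions_mul_doubleTranspositions
  have hTT := V.character_one_mul_sum_eq_of_map_mul_eq transpositions_mul_transpositions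
  have hT3 := V.character_one_mul_sum_eq_of_map_mul_eq transpositions_mul_threeCycles
  have hnorm := (FDRep.simple_iff_char_is_norm_one V).mp inferInstance
  simp only [V.character_perm_inv] at hnorm
  rw [← Finset.sum_map_val, univ_val_eq] at hnorm
  have hχ := sum_conjClassFinset_of_conj_invariant V.char_conj
  have hχ2 := sum_conjClassFinset_of_conj_invariant (f := fun g => V.character g * V.character g)
    fun g h => by simp only [V.char_conj]
  obtain ⟨c2, c22, c3, c4⟩ := card_conjClasses
  simp only [transpositions, doubleTranspositions, threeCycles, fourCycles] at *
  simp only [Multiset.map_add, Multiset.map_nsmul, Multiset.sum_add, Multiset.sum_nsmul,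
    Finset.sum_map_val, hχ, hχ2, c2, c22, c3, c4, Multiset.map_singleton,
    Multiset.sum_singleton, hdeg, nsmul_eq_mul, Nat.card_eq_fintype_card, Fintype.card_perm,
    Fintype.card_fin, Nat.factorial] at hDD hTD hTT hT3 hnorm
  set x₂ := V.character (swap 0 1)
  set x₂₂ := V.character (swap 0 1 * swap 2 3)
  set x₃ := V.character (swap 0 1 * swap 1 2)
  set x₄ := V.character (swap 0 1 * swap 1 2 * swap 2 3)
  push_cast at hDD hTD hTT hT3 hnorm
  -- `x₂₂ = 3` would make the Klein four-group act trivially; the norm relation rules it out.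
  have hquad : (x₂₂ - 3) * (x₂₂ + 1) = 0 := by linear_combination -hDD / 9
  refine eq_neg_of_add_eq_zero_left ((mul_eq_zero.mp hquad).resolve_left fun h3 => ?_)
  have hx₂₂ : x₂₂ = 3 := by linear_combination h3
  have hx₄ : x₄ = x₂ := by linear_combination hTD / 36 + x₂ / 2 * h3
  have hx₂x₃ : x₂ * (x₃ - 3) = 0 := by linear_combination -hT3 / 48 + 3 / 2 * hx₄
  have hx₂sq : x₂ * x₂ = 3 + 2 * x₃ := by linear_combination -hTT / 36 + h3 / 2
  rw [hx₄, hx₂₂, hx₂sq] at hnorm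
  rcases mul_eq_zero.mp hx₂x₃ with hx₂ | hx₃
  · have hx₃ : x₃ = -3 / 2 := by linear_combination -hx₂sq / 2 + x₂ / 2 * hx₂
    rw [hx₃] at hnorm
    norm_num at hnorm
  · rw [show x₃ = 3 by linear_combination hx₃] at hnorm
    norm_num at hnorm

namespace S4

theorem sum_character_mul_kleinFour (V : FDRep ℂ S₄) [CategoryTheory.Simple V]
    (hdeg : V.character 1 = 3) (σ : S₄) : ∑ c ∈ kleinFour, V.character (σ * c) = 0 := by
  have h := V.character_one_mul_sum_sum_character_mul {σ} doubleTranspositions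
    fun h _ hx => conj_mem_conjClassFinset h hx
  obtain ⟨-, hcard, -, -⟩ := card_conjClasses
  rw [doubleTranspositions] at h hcard
  rw [Finset.sum_singleton, Finset.sum_singleton,
    sum_conjClassFinset_of_conj_invariant V.char_conj, hcard,
    V.character_swap_mul_swap_eq_neg_one hdeg, hdeg] at h
  rw [kleinFour_eq_insert_one, Finset.sum_insert (by decide), mul_one, doubleTranspositions]
  linear_combination h / 3

end S4

theorem Finset.sum_smul_eq_zero_of_sum_mul_eq_zero {G k M : Type*} [Group G] [Fintype G]
    [Field k] [CharZero k] [AddCommGroup M] [Module k M] {H : Finset G} (hH : H.Nonempty)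
    {χ : G → k} {f : G → M} (hf : ∀ σ, ∀ c ∈ H, f (σ * c) = f σ)
    (hχ : ∀ σ, ∑ c ∈ H, χ (σ * c) = 0) : ∑ σ, χ σ • f σ = 0 := by
  have hcard : (H.card : k) • ∑ σ, χ σ • f σ = 0 :=
    calc (H.card : k) • ∑ σ, χ σ • f σ = ∑ c ∈ H, ∑ σ, χ (σ * c) • f (σ * c) := by
          rw [Nat.cast_smul_eq_nsmul, ← Finset.sum_const]
          exact Finset.sum_congr rfl fun c _ =>
            (Fintype.sum_equiv (Equiv.mulRight c) _ _ fun σ => rfl).symm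
      _ = ∑ σ, (∑ c ∈ H, χ (σ * c)) • f σ := by
          rw [Finset.sum_comm]
          simp only [Finset.sum_smul]
          exact Finset.sum_congr rfl fun σ _ => Finset.sum_congr rfl fun c hc => by rw [hf σ c hc]
      _ = 0 := by simp only [hχ, zero_smul, Finset.sum_const_zero]
  exact (smul_eq_zero.mp hcard).resolve_left (by simpa using hH.ne_empty)

/-- `pauli` with entries in `ℤ[i]`, where equalities between its entries are decidable. -/
def pauliInt (a : ZMod 2 × ZMod 2) (x y : ZMod 2) : GaussianInt :=
  if a = (0, 0) then (if x = y then 1 else 0)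
  else if a = (0, 1) then (if x = y + 1 then 1 else 0)
  else if a = (1, 0) then (if x = y then (if x = 0 then 1 else -1) else 0)
  else (if x = y + 1 then (if x = 0 then -⟨0, 1⟩ else ⟨0, 1⟩) else 0)

theorem pauli_apply_eq_toComplex (a : ZMod 2 × ZMod 2) (x y : ZMod 2) :
    pauli a x y = GaussianInt.toComplex (pauliInt a x y) := by
  simp only [pauli, pauliInt, Matrix.of_apply]
  split_ifs <;> simp [GaussianInt.toComplex_def]

def pauliKernel {t : ℕ} (p q : Fin t → ZMod 2) : ℂ := ∑ a, ∏ i, pauli a (p i) (q i)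

theorem stabProj_apply (n t : ℕ) (x y : Fin t → Fin n → ZMod 2) :
    stabProj n t x y =
      ((2 : ℂ) ^ (2 * n))⁻¹ * ∏ j, pauliKernel (fun i => x i j) (fun i => y i j) := by
  simp only [stabProj, pauliKernel, Matrix.smul_apply, Matrix.sum_apply, smul_eq_mul,
    Finset.prod_univ_sum, Fintype.piFinset_univ, tpow, PauliW, Matrix.of_apply]
  congr 1
  exact Finset.sum_congr rfl fun a _ => Finset.prod_comm

theorem pauliKernel_comp_kleinFour {c : S₄} (hc : c ∈ S4.kleinFour) (p q : Fin 4 → ZMod 2) :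
    pauliKernel (fun i => p (c i)) q = pauliKernel p q := by
  have key : ∀ c ∈ S4.kleinFour, ∀ p q : Fin 4 → ZMod 2,
      ∑ a, ∏ i, pauliInt a (p (c i)) (q i) = ∑ a, ∏ i, pauliInt a (p i) (q i) := by
    decide
  simp only [pauliKernel, pauli_apply_eq_toComplex, ← map_prod, ← map_sum, key c hc p q]

theorem stabProj_comp_kleinFour (n : ℕ) {c : S₄} (hc : c ∈ S4.kleinFour)
    (x y : Fin 4 → Fin n → ZMod 2) : stabProj n 4 (fun i => x (c i)) y = stabProj n 4 x y := by
  rw [stabProj_apply, stabProj_apply]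
  congr 1
  exact Finset.prod_congr rfl fun j _ => pauliKernel_comp_kleinFour hc (fun i => x i j) _

theorem permOp_mul_apply {α : Type*} [DecidableEq α] [Fintype α] {t : ℕ} (σ : Equiv.Perm (Fin t))
    (M : Matrix (Fin t → α) (Fin t → α) ℂ) (x y : Fin t → α) :
    (permOp α σ * M) x y = M (fun k => x (σ k)) y := by
  rw [Matrix.mul_apply, Finset.sum_eq_single (fun k => x (σ k))]
  · simp [permOp]
  · intro z _ hz
    simp [permOp, Ne.symm hz]
  · simp

theorem permOp_mul {α : Type*} [DecidableEq α] [Fintype α] {t : ℕ} (σ τ : Equiv.Perm (Fin t)) :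
    permOp α (σ * τ) = permOp α σ * permOp α τ := by
  ext x y
  rw [permOp_mul_apply]
  rfl

theorem permOp_mul_stabProj (n : ℕ) {c : S₄} (hc : c ∈ S4.kleinFour) :
    permOp (Fin n → ZMod 2) c * stabProj n 4 = stabProj n 4 := by
  ext x y
  rw [permOp_mul_apply, stabProj_comp_kleinFour n hc]

theorem stmt7 (n : ℕ)
    (V : FDRep ℂ (Equiv.Perm (Fin 4))) [CategoryTheory.Simple V]
    (hdeg : V.character 1 = 3) :
    (((3 : ℂ) / 24) • ∑ σ : Equiv.Perm (Fin 4),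
        V.character σ • permOp (Fin n → ZMod 2) σ) * stabProj n 4 = 0 := by
  rw [smul_mul_assoc, Finset.sum_mul]
  simp only [smul_mul_assoc]
  refine smul_eq_zero_of_right _ (Finset.sum_smul_eq_zero_of_sum_mul_eq_zero ⟨1, by decide⟩
    (fun σ c hc => ?_) (S4.sum_character_mul_kleinFour V hdeg))
  rw [permOp_mul, mul_assoc, permOp_mul_stabProj n hc]

end
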